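/- arXiv:2502.13382 — 7 statements merged into one kernel-verified Lean document; each statement's English description precedes it below -/
import Mathlib

section
/- Let a family of numbers T(n,k) (for 0 ≤ k ≤ n, with T(n,k) = 0 for k < 0 or k > n) satisfy T(n,k) = (αn + βk + γ)T(n-1,k) + (α'n + β'k + γ')T(n-1,k-1) for n ≥ 1, with T(0,0) = 1. Define the polynomials P_n(x) = Σ_{k=0}^{n} T(n,k) x^k. Then for all n ≥ 1, P_n(x) = ((α'x + α)n + (β' + γ')x + γ)·P_{n-1}(x) + x(β + β'x)·P'_{n-1}(x), where P' denotes the derivative. -/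
open Polynomial

theorem stmt_4 (α β γ α' β' γ' : ℝ) (T : ℕ → ℤ → ℝ)
    (h0 : T 0 0 = 1)
    (hz : ∀ (n : ℕ) (k : ℤ), (k < 0 ∨ (n : ℤ) < k) → T n k = 0)
    (hrec : ∀ n : ℕ, 1 ≤ n → ∀ k : ℤ, 0 ≤ k → k ≤ (n : ℤ) →
      T n k = (α * n + β * k + γ) * T (n - 1) k
        + (α' * n + β' * k + γ') * T (n - 1) (k - 1))
    (P : ℕ → Polynomial ℝ)
    (hP : ∀ n : ℕ, P n = ∑ k ∈ Finset.range (n + 1), C (T n (k : ℤ)) * X ^ k) :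
    ∀ n : ℕ, 1 ≤ n →
      P n = (C (α' * n + β' + γ') * X + C (α * n + γ)) * P (n - 1)
        + (C β * X + C β' * X ^ 2) * derivative (P (n - 1)) := by
  have key : ∀ (m : ℕ) (j : ℕ), (P m).coeff j = T m j := by
    intro m j
    rw [hP, Polynomial.finset_sum_coeff]
    simp only [Polynomial.coeff_C_mul, Polynomial.coeff_X_pow, mul_ite, mul_one, mul_zero]
    rw [Finset.sum_ite_eq (Finset.range (m + 1)) j (fun k => T m k)]
    split_ifs with h
    · rfl
    · simp only [Finset.mem_range, not_lt] at h
      exact (hz m j (Or.inr (by exact_mod_cast (by omega : m < j)))).symm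
  intro n hn
  set Q := P (n - 1) with hQ
  have expand : (C (α' * n + β' + γ') * X + C (α * n + γ)) * Q
        + (C β * X + C β' * X ^ 2) * derivative Q
      = C (α' * n + β' + γ') * (X * Q) + C (α * n + γ) * Q
        + (C β * (X * derivative Q) + C β' * (X * (X * derivative Q))) := by ring
  rw [expand]
  ext k
  simp only [coeff_add, coeff_C_mul]
  match k with
  | 0 =>
    simp only [mul_coeff_zero, coeff_X_zero, zero_mul, mul_zero, add_zero, hQ, key]
    have h := hrec n hn 0 le_rfl (by exact_mod_cast Nat.zero_le n)
    rw [hz (n-1) (0 - 1) (Or.inl (by norm_num))] at h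
    push_cast at h ⊢
    rw [h]; ring
  | 1 =>
    rw [coeff_X_mul, coeff_X_mul, coeff_X_mul, mul_coeff_zero, coeff_X_zero]
    simp only [coeff_derivative, hQ, key]
    have h := hrec n hn 1 (by norm_num) (by exact_mod_cast hn)
    rw [show (1:ℤ) - 1 = 0 by ring] at h
    push_cast at h ⊢
    rw [h]; ring
  | (i+2) =>
    rw [coeff_X_mul, coeff_X_mul, coeff_X_mul, coeff_X_mul]
    simp only [coeff_derivative, hQ, key]
    by_cases hk : i + 2 ≤ n
    · have h := hrec n hn ((i:ℤ)+2) (by omega) (by exact_mod_cast hk)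
      rw [show ((i:ℤ)+2) - 1 = (i:ℤ)+1 by ring] at h
      push_cast at h ⊢
      rw [h]; ring
    · rw [show ((i+2 : ℕ) : ℤ) = (i:ℤ)+2 by push_cast; ring,
        show ((i+1 : ℕ) : ℤ) = (i:ℤ)+1 by push_cast; ring]
      rw [hz n ((i:ℤ)+2) (Or.inr (by exact_mod_cast (by omega : (n:ℤ) < (i:ℤ)+2))),
        hz (n-1) ((i:ℤ)+2) (Or.inr (by
          have : ((n-1 : ℕ) : ℤ) = (n:ℤ) - 1 := by omega
          omega)),
        hz (n-1) ((i:ℤ)+1) (Or.inr (by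
          have : ((n-1 : ℕ) : ℤ) = (n:ℤ) - 1 := by omega
          omega))]
      ring
end

section
/- Suppose T(n,k) satisfies T(n,k) = (αn+γ)T(n-1,k) + (α'n+γ')T(n-1,k-1) for n ≥ 1, T(0,0) = 1, and T(n,k) = 0 outside 0 ≤ k ≤ n (i.e. the case β = β' = 0). Then the generating polynomial P_n(x) = Σ_{k=0}^n T(n,k)x^k factors as P_n(x) = ∏_{k=1}^{n} ((α'k + γ')x + (αk + γ)). -/
open Polynomial

theorem stmt_6 (α γ α' γ' : ℝ) (T : ℕ → ℤ → ℝ)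
    (h0 : T 0 0 = 1)
    (hz : ∀ (n : ℕ) (k : ℤ), (k < 0 ∨ (n : ℤ) < k) → T n k = 0)
    (hrec : ∀ n : ℕ, 1 ≤ n → ∀ k : ℤ, 0 ≤ k → k ≤ (n : ℤ) →
      T n k = (α * n + γ) * T (n - 1) k + (α' * n + γ') * T (n - 1) (k - 1))
    (P : ℕ → Polynomial ℝ)
    (hP : ∀ n : ℕ, P n = ∑ k ∈ Finset.range (n + 1), C (T n (k : ℤ)) * X ^ k) :
    ∀ n : ℕ, P n = ∏ k ∈ Finset.Icc 1 n, (C (α' * k + γ') * X + C (α * k + γ)) := by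
  intro n
  induction n with
  | zero => simp [hP 0, h0]
  | succ n ih =>
    rw [Finset.prod_Icc_succ_top (Nat.le_add_left 1 n), ← ih]
    have key : P (n + 1) =
        (C (α' * (↑(n + 1) : ℝ) + γ') * X + C (α * (↑(n + 1) : ℝ) + γ)) * P n := by
      rw [hP (n + 1), hP n]
      have hT : ∀ k ∈ Finset.range (n + 2),
          C (T (n + 1) (k : ℤ)) * X ^ k =
          C (α * (↑(n + 1) : ℝ) + γ) * (C (T n (k : ℤ)) * X ^ k) +
          C (α' * (↑(n + 1) : ℝ) + γ') * (C (T n ((k : ℤ) - 1)) * X ^ k) := by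
        intro k hk
        rw [Finset.mem_range] at hk
        have := hrec (n + 1) (Nat.le_add_left 1 n) k (Int.ofNat_nonneg k)
          (by exact_mod_cast Nat.lt_succ_iff.mp hk)
        simp only [Nat.add_sub_cancel] at this
        rw [this]
        push_cast
        ring_nf
        simp [map_add, map_mul]
        ring
      rw [Finset.sum_congr rfl hT, Finset.sum_add_distrib, ← Finset.mul_sum, ← Finset.mul_sum]
      have h1 : ∑ k ∈ Finset.range (n + 2), C (T n (k : ℤ)) * X ^ k =
          ∑ k ∈ Finset.range (n + 1), C (T n (k : ℤ)) * X ^ k := by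
        rw [Finset.sum_range_succ]
        push_cast
        rw [hz n ((n : ℤ) + 1) (Or.inr (by linarith))]
        simp
      have h2 : ∑ k ∈ Finset.range (n + 2), C (T n ((k : ℤ) - 1)) * X ^ k =
          X * ∑ k ∈ Finset.range (n + 1), C (T n (k : ℤ)) * X ^ k := by
        rw [Finset.sum_range_succ' (fun k => C (T n ((k : ℤ) - 1)) * X ^ k)]
        push_cast
        rw [hz n (-1) (Or.inl (by norm_num))]
        simp only [add_sub_cancel_right, map_zero, zero_mul, pow_zero, mul_one, add_zero]
        rw [Finset.mul_sum]
        refine Finset.sum_congr rfl fun k _ => ?_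
        ring_nf
      rw [h1, h2]
      ring
    rw [key]
    push_cast
    ring
end

section
/- Fix reals β' > 0, γ' ≥ 0, γ > 0, and for n ≥ 0 define S_n = Σ_{k=0}^{n} (β'/(β'+γ))^k · Γ(k+1+γ'/β') / (k!·(n-k)!) · (γ/(β'+γ))^{n-k}. Then for all n ≥ 1, S_n ≥ (β'/(β'+γ))·S_{n-1}. -/
/-!
Write `p = β'/(β'+γ)`, `q = γ/(β'+γ)` and `a = γ'/β'`. Shifting the summation index by one,
`p · S_{n-1}` is the sum over `k ≥ 1` of the terms of `S_n`, except that each `Γ(k + a) / (k-1)!`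
is replaced by `Γ(k + 1 + a) / k! = (k + a)/k · Γ(k + a) / (k-1)!`, which is larger since `a ≥ 0`.
The remaining term `k = 0` of `S_n` is nonnegative.
-/

open Finset Real

noncomputable section

def gammaBinomTerm (p q a : ℝ) (n k : ℕ) : ℝ :=
  p ^ k * Gamma (k + 1 + a) / (k.factorial * (n - k).factorial) * q ^ (n - k)

def gammaBinomSum (p q a : ℝ) (n : ℕ) : ℝ :=
  ∑ k ∈ range (n + 1), gammaBinomTerm p q a n k

lemma Gamma_div_factorial_le_succ {a : ℝ} (ha : 0 ≤ a) (k : ℕ) :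
    Gamma (k + 1 + a) / k.factorial ≤ Gamma ((k + 1 : ℕ) + 1 + a) / (k + 1).factorial := by
  have hΓ : 0 < Gamma (k + 1 + a) := Gamma_pos_of_pos (by positivity)
  have hk : (0 : ℝ) < k.factorial := by positivity
  have hsucc : Gamma ((k + 1 : ℕ) + 1 + a) = (k + 1 + a) * Gamma (k + 1 + a) := by
    rw [← Gamma_add_one (by positivity)]
    push_cast
    ring_nf
  rw [hsucc, Nat.factorial_succ, Nat.cast_mul, div_le_div_iff₀ hk (by positivity)]
  push_cast
  nlinarith [mul_nonneg (mul_nonneg ha hΓ.le) hk.le]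

section

variable {p q a : ℝ}

lemma gammaBinomTerm_eq (n k : ℕ) :
    gammaBinomTerm p q a n k
      = p ^ k * q ^ (n - k) / (n - k).factorial * (Gamma (k + 1 + a) / k.factorial) := by
  unfold gammaBinomTerm
  ring

lemma gammaBinomTerm_nonneg (hp : 0 ≤ p) (hq : 0 ≤ q) (ha : 0 ≤ a) (n k : ℕ) :
    0 ≤ gammaBinomTerm p q a n k := by
  have : 0 < Gamma (k + 1 + a) := Gamma_pos_of_pos (by positivity)
  unfold gammaBinomTerm
  positivity

lemma mul_gammaBinomTerm_le_succ (hp : 0 ≤ p) (hq : 0 ≤ q) (ha : 0 ≤ a) (m k : ℕ) :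
    p * gammaBinomTerm p q a m k ≤ gammaBinomTerm p q a (m + 1) (k + 1) := by
  rw [gammaBinomTerm_eq, gammaBinomTerm_eq, Nat.add_sub_add_right, pow_succ, ← mul_assoc]
  have hcoef : 0 ≤ p ^ k * p * q ^ (m - k) / (m - k).factorial := by positivity
  calc p * (p ^ k * q ^ (m - k) / (m - k).factorial) * (Gamma (k + 1 + a) / k.factorial)
      = p ^ k * p * q ^ (m - k) / (m - k).factorial * (Gamma (k + 1 + a) / k.factorial) := by
        ring
    _ ≤ _ := mul_le_mul_of_nonneg_left (Gamma_div_factorial_le_succ ha k) hcoef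

lemma mul_gammaBinomSum_le_succ (hp : 0 ≤ p) (hq : 0 ≤ q) (ha : 0 ≤ a) (m : ℕ) :
    p * gammaBinomSum p q a m ≤ gammaBinomSum p q a (m + 1) := by
  unfold gammaBinomSum
  rw [mul_sum, sum_range_succ' _ (m + 1)]
  exact le_add_of_le_of_nonneg
    (sum_le_sum fun k _ => mul_gammaBinomTerm_le_succ hp hq ha m k)
    (gammaBinomTerm_nonneg hp hq ha _ _)

end

end

theorem stmt_8 (β' γ' γ : ℝ) (hβ' : 0 < β') (hγ' : 0 ≤ γ') (hγ : 0 < γ)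
    (S : ℕ → ℝ)
    (hS : ∀ n : ℕ, S n = ∑ k ∈ Finset.range (n + 1),
      (β' / (β' + γ)) ^ k * Real.Gamma (k + 1 + γ' / β')
        / (k.factorial * (n - k).factorial) * (γ / (β' + γ)) ^ (n - k)) :
    ∀ n : ℕ, 1 ≤ n → S n ≥ (β' / (β' + γ)) * S (n - 1) := by
  have hS' : S = gammaBinomSum (β' / (β' + γ)) (γ / (β' + γ)) (γ' / β') := funext hS
  rintro (_ | m) hm
  · omega
  rw [hS', Nat.add_sub_cancel]
  exact mul_gammaBinomSum_le_succ (by positivity) (by positivity) (by positivity) m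
end

section
/- Fix reals β' > 0, γ' ≥ 0, γ > 0, and define S_n = Σ_{k=0}^{n} (β'/(β'+γ))^k · Γ(k+1+γ'/β')/(k!·(n-k)!) · (γ/(β'+γ))^{n-k}. Then for all m ≤ n, S_m ≤ ((β'+γ)/β')^{n-m} · S_n. -/
/-!
Comparing the sums for `n` and `n + 1` term by term, with the `k`-th term of `S n` against the
`(k + 1)`-st term of `S (n + 1)`, reduces to `(k + 1) Γ(k + 1 + c) ≤ Γ(k + 2 + c)`, which is the
functional equation of `Γ` together with `c = γ'/β' ≥ 0`. Hence `p S_n ≤ S_{n+1}` with `p = β'/(β'+γ)`,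
and the claim follows by iterating.
-/

open Finset

theorem Real.mul_Gamma_le_Gamma_add_one {x c : ℝ} (hx : 0 < x) (hc : 0 ≤ c) :
    x * Real.Gamma (x + c) ≤ Real.Gamma (x + c + 1) := by
  have hxc : 0 < x + c := by linarith
  rw [Real.Gamma_add_one hxc.ne']
  exact mul_le_mul_of_nonneg_right (by linarith) (Real.Gamma_pos_of_pos hxc).le

theorem le_pow_sub_mul_of_le_mul_succ {S : ℕ → ℝ} {C : ℝ} (hC : 0 ≤ C)
    (hstep : ∀ n, S n ≤ C * S (n + 1)) {m n : ℕ} (hmn : m ≤ n) :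
    S m ≤ C ^ (n - m) * S n := by
  induction n, hmn using Nat.le_induction with
  | base => simp
  | succ n hmn ih =>
    calc S m ≤ C ^ (n - m) * S n := ih
      _ ≤ C ^ (n - m) * (C * S (n + 1)) := mul_le_mul_of_nonneg_left (hstep n) (by positivity)
      _ = C ^ (n + 1 - m) * S (n + 1) := by
        rw [Nat.sub_add_comm hmn, pow_succ, mul_assoc]

noncomputable def weightedBinomialSum (p q : ℝ) (a : ℕ → ℝ) (n : ℕ) : ℝ :=
  ∑ k ∈ range (n + 1), p ^ k * a k / (k.factorial * (n - k).factorial) * q ^ (n - k)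

theorem mul_weightedBinomialSum_le_succ {p q : ℝ} {a : ℕ → ℝ} (hp : 0 ≤ p) (hq : 0 ≤ q)
    (ha₀ : 0 ≤ a 0) (ha : ∀ k : ℕ, (k + 1) * a k ≤ a (k + 1)) (n : ℕ) :
    p * weightedBinomialSum p q a n ≤ weightedBinomialSum p q a (n + 1) := by
  rw [weightedBinomialSum, weightedBinomialSum, mul_sum, sum_range_succ' _ (n + 1)]
  refine le_add_of_le_of_nonneg (sum_le_sum fun k _ => ?_) (by positivity)
  rw [Nat.succ_sub_succ, Nat.factorial_succ, Nat.cast_mul, Nat.cast_succ]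
  calc p * (p ^ k * a k / (k.factorial * (n - k).factorial) * q ^ (n - k))
      = p ^ (k + 1) * ((k + 1) * a k) / ((k + 1) * k.factorial * (n - k).factorial)
          * q ^ (n - k) := by
        field_simp
        ring
    _ ≤ p ^ (k + 1) * a (k + 1) / ((k + 1) * k.factorial * (n - k).factorial)
          * q ^ (n - k) := by
        gcongr
        exact ha k

theorem stmt_9 (β' γ' γ : ℝ) (hβ' : 0 < β') (hγ' : 0 ≤ γ') (hγ : 0 < γ)
    (S : ℕ → ℝ)
    (hS : ∀ n : ℕ, S n = ∑ k ∈ Finset.range (n + 1),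
      (β' / (β' + γ)) ^ k * Real.Gamma (k + 1 + γ' / β')
        / (k.factorial * (n - k).factorial) * (γ / (β' + γ)) ^ (n - k)) :
    ∀ m n : ℕ, m ≤ n → S m ≤ ((β' + γ) / β') ^ (n - m) * S n := by
  set p := β' / (β' + γ) with hp
  set a : ℕ → ℝ := fun k => Real.Gamma (k + 1 + γ' / β')
  have hc : 0 ≤ γ' / β' := div_nonneg hγ' hβ'.le
  have hS' : S = weightedBinomialSum p (γ / (β' + γ)) a := funext hS
  have hmono : ∀ n, p * S n ≤ S (n + 1) := by
    rw [hS']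
    refine mul_weightedBinomialSum_le_succ (by positivity) (by positivity)
      (Real.Gamma_pos_of_pos (by positivity)).le fun k => ?_
    simpa [a, add_right_comm _ (1 : ℝ) (γ' / β')] using
      Real.mul_Gamma_le_Gamma_add_one (x := k + 1) (by positivity) hc
  have hCp : (β' + γ) / β' * p = 1 := by
    have : β' + γ ≠ 0 := by positivity
    rw [hp]
    field_simp
  intro m n hmn
  refine le_pow_sub_mul_of_le_mul_succ (by positivity) (fun n => ?_) hmn
  calc S n = (β' + γ) / β' * (p * S n) := by rw [← mul_assoc, hCp, one_mul]
    _ ≤ (β' + γ) / β' * S (n + 1) := mul_le_mul_of_nonneg_left (hmono n) (by positivity)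
end

section
/- Fix reals β' > 0, γ' ≥ 0, γ > 0. Define S_n as above and define random variables X_n by P(X_n = k) = p_{n,k} where p_{n,k} = (β')^k · C(k+γ'/β', k) · γ^{n-k}/(n-k)! normalized to sum to 1 over 0 ≤ k ≤ n (here C(k+r,k) = Γ(k+r+1)/(k!·Γ(r+1)) is the generalized binomial coefficient). Then E[n - X_n] = (γ/(β'+γ)) · S_{n-1}/S_n for all n ≥ 1. -/
theorem stmt_11 (β' γ' γ : ℝ) (hβ' : 0 < β') (hγ' : 0 ≤ γ') (hγ : 0 < γ)
    (S : ℕ → ℝ)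
    (hS : ∀ n : ℕ, S n = ∑ k ∈ Finset.range (n + 1),
      (β' / (β' + γ)) ^ k * Real.Gamma (k + 1 + γ' / β')
        / (k.factorial * (n - k).factorial) * (γ / (β' + γ)) ^ (n - k))
    (w : ℕ → ℕ → ℝ)
    (hw : ∀ n k : ℕ, w n k = β' ^ k
      * (Real.Gamma (k + 1 + γ' / β') / (k.factorial * Real.Gamma (1 + γ' / β')))
      * γ ^ (n - k) / (n - k).factorial) :
    ∀ n : ℕ, 1 ≤ n →
      (∑ k ∈ Finset.range (n + 1), ((n : ℝ) - k) * w n k)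
          / (∑ k ∈ Finset.range (n + 1), w n k)
        = (γ / (β' + γ)) * S (n - 1) / S n := by
  have hc : 0 < Real.Gamma (1 + γ' / β') := Real.Gamma_pos_of_pos (by positivity)
  have hΓ : ∀ k : ℕ, 0 < Real.Gamma (k + 1 + γ' / β') := fun k =>
    Real.Gamma_pos_of_pos (by positivity)
  have hbg : 0 < β' + γ := by linarith
  have hSpos : ∀ n : ℕ, 0 < S n := by
    intro n
    rw [hS]
    apply Finset.sum_pos
    · intro k _
      have h1 := hΓ k
      have h2 : (0:ℝ) < k.factorial := by exact_mod_cast k.factorial_pos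
      have h3 : (0:ℝ) < (n-k).factorial := by exact_mod_cast (n-k).factorial_pos
      positivity
    · exact Finset.nonempty_range_add_one
  have hsum : ∀ n : ℕ, ∑ k ∈ Finset.range (n+1), w n k
      = (β' + γ)^n / Real.Gamma (1 + γ'/β') * S n := by
    intro n
    rw [hS, Finset.mul_sum]
    apply Finset.sum_congr rfl
    intro k hk
    have hk' : k ≤ n := Nat.lt_succ_iff.mp (Finset.mem_range.mp hk)
    rw [hw]
    have hpow : (β' + γ)^n = (β'+γ)^k * (β'+γ)^(n-k) := by
      rw [← pow_add, Nat.add_sub_cancel' hk']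
    rw [hpow, div_pow, div_pow]
    have h1 : (k.factorial : ℝ) ≠ 0 := Nat.cast_ne_zero.mpr k.factorial_ne_zero
    have h2 : ((n-k).factorial : ℝ) ≠ 0 := Nat.cast_ne_zero.mpr (n-k).factorial_ne_zero
    have h3 : (β'+γ)^k ≠ 0 := pow_ne_zero _ hbg.ne'
    have h4 : (β'+γ)^(n-k) ≠ 0 := pow_ne_zero _ hbg.ne'
    field_simp
  have hnum : ∀ n : ℕ, 1 ≤ n → ∑ k ∈ Finset.range (n+1), ((n:ℝ) - k) * w n k
      = γ * ∑ k ∈ Finset.range n, w (n-1) k := by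
    intro n hn
    rw [Finset.sum_range_succ]
    simp only [sub_self, zero_mul, add_zero]
    rw [Finset.mul_sum]
    apply Finset.sum_congr rfl
    intro k hk
    have hk' : k < n := Finset.mem_range.mp hk
    rw [hw, hw]
    have h1 : n - k = (n - 1 - k) + 1 := by omega
    rw [h1, pow_succ, Nat.factorial_succ]
    have hcast : ((n - 1 - k : ℕ) : ℝ) + 1 = (n:ℝ) - k := by
      have h3 : (n - 1 - k) + 1 + k = n := by omega
      have := congrArg (Nat.cast : ℕ → ℝ) h3
      push_cast at this
      linarith
    rw [← hcast]
    have h2 : ((n-1-k).factorial : ℝ) ≠ 0 := Nat.cast_ne_zero.mpr (n-1-k).factorial_ne_zero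
    have h3 : (k.factorial : ℝ) ≠ 0 := Nat.cast_ne_zero.mpr k.factorial_ne_zero
    have h4 : ((n-1-k : ℕ) : ℝ) + 1 ≠ 0 := by positivity
    push_cast
    field_simp
  intro n hn
  rw [hnum n hn, hsum n]
  have hS1 : ∑ k ∈ Finset.range n, w (n-1) k
      = (β'+γ)^(n-1) / Real.Gamma (1 + γ'/β') * S (n-1) := by
    have := hsum (n-1)
    rwa [Nat.sub_add_cancel hn] at this
  rw [hS1]
  have hpow : (β'+γ)^n = (β'+γ)^(n-1) * (β'+γ) := by
    rw [← pow_succ, Nat.sub_add_cancel hn]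
  rw [hpow]
  have h1 := (hSpos n).ne'
  have h2 := hc.ne'
  have h3 : (β'+γ)^(n-1) ≠ 0 := pow_ne_zero _ hbg.ne'
  field_simp
end

section
/- With the same setup (β' > 0, γ' ≥ 0, γ > 0, p_{n,k} and S_n as above), for all n ≥ 2: E[(n - X_n)(n - 1 - X_n)] = (γ/(β'+γ))^2 · S_{n-2}/S_n, and consequently Var(X_n) = (γ/(β'+γ))·(S_{n-1}/S_n)·(1 + (γ/(β'+γ))·(S_{n-2}/S_{n-1} - S_{n-1}/S_n)). -/
theorem stmt_12 (β' γ' γ : ℝ) (hβ' : 0 < β') (hγ' : 0 ≤ γ') (hγ : 0 < γ)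
    (S : ℕ → ℝ)
    (hS : ∀ n : ℕ, S n = ∑ k ∈ Finset.range (n + 1),
      (β' / (β' + γ)) ^ k * Real.Gamma (k + 1 + γ' / β')
        / (k.factorial * (n - k).factorial) * (γ / (β' + γ)) ^ (n - k))
    (w : ℕ → ℕ → ℝ)
    (hw : ∀ n k : ℕ, w n k = β' ^ k
      * (Real.Gamma (k + 1 + γ' / β') / (k.factorial * Real.Gamma (1 + γ' / β')))
      * γ ^ (n - k) / (n - k).factorial) :
    ∀ n : ℕ, 2 ≤ n →
      (∑ k ∈ Finset.range (n + 1), ((n : ℝ) - k) * ((n : ℝ) - 1 - k) * w n k)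
          / (∑ k ∈ Finset.range (n + 1), w n k)
        = (γ / (β' + γ)) ^ 2 * S (n - 2) / S n ∧
      ((∑ k ∈ Finset.range (n + 1), ((n : ℝ) - k) * ((n : ℝ) - 1 - k) * w n k)
            / (∑ k ∈ Finset.range (n + 1), w n k)
          + (∑ k ∈ Finset.range (n + 1), ((n : ℝ) - k) * w n k)
            / (∑ k ∈ Finset.range (n + 1), w n k)
          - ((∑ k ∈ Finset.range (n + 1), ((n : ℝ) - k) * w n k)
            / (∑ k ∈ Finset.range (n + 1), w n k)) ^ 2)
        = (γ / (β' + γ)) * (S (n - 1) / S n)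
            * (1 + (γ / (β' + γ)) * (S (n - 2) / S (n - 1) - S (n - 1) / S n)) := by
  have hβγ : 0 < β' + γ := by linarith
  have hΓ0 : 0 < Real.Gamma (1 + γ' / β') :=
    Real.Gamma_pos_of_pos (by positivity)
  have hΓ : ∀ k : ℕ, 0 < Real.Gamma (k + 1 + γ' / β') := fun k =>
    Real.Gamma_pos_of_pos (by positivity)
  have hSpos : ∀ n : ℕ, 0 < S n := by
    intro n
    rw [hS]
    apply Finset.sum_pos
    · intro k _
      have h1 : (0:ℝ) < (β' / (β' + γ)) ^ k := by positivity
      have h2 := hΓ k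
      have h3 : (0:ℝ) < (k.factorial : ℝ) * (n - k).factorial := by positivity
      have h4 : (0:ℝ) < (γ / (β' + γ)) ^ (n - k) := by positivity
      exact mul_pos (div_pos (mul_pos h1 h2) h3) h4
    · exact ⟨0, Finset.mem_range.mpr (Nat.succ_pos n)⟩
  -- sum of weights equals scaled S
  have hA : ∀ n : ℕ, (∑ k ∈ Finset.range (n + 1), w n k)
      = (β' + γ) ^ n / Real.Gamma (1 + γ' / β') * S n := by
    intro n
    rw [hS, Finset.mul_sum]
    refine Finset.sum_congr rfl fun k hk => ?_
    have hk' : k ≤ n := Nat.lt_succ_iff.mp (Finset.mem_range.mp hk)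
    rw [hw]
    have hpow : (β' + γ) ^ n = (β' + γ) ^ k * (β' + γ) ^ (n - k) := by
      rw [← pow_add]; congr 1; omega
    rw [hpow, div_pow, div_pow]
    have hf1 : ((k.factorial : ℝ)) ≠ 0 := by positivity
    have hf2 : (((n - k).factorial : ℝ)) ≠ 0 := by positivity
    have hbγk : (β' + γ) ^ k ≠ 0 := by positivity
    have hbγnk : (β' + γ) ^ (n - k) ≠ 0 := by positivity
    field_simp
  -- first falling moment
  have hB : ∀ n : ℕ, (∑ k ∈ Finset.range (n + 1 + 1), (((n:ℝ) + 1) - k) * w (n + 1) k)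
      = γ * ∑ k ∈ Finset.range (n + 1), w n k := by
    intro n
    rw [Finset.sum_range_succ]
    have hz : (((n:ℝ) + 1) - ((n + 1 : ℕ) : ℝ)) = 0 := by push_cast; ring
    rw [hz, zero_mul, add_zero, Finset.mul_sum]
    refine Finset.sum_congr rfl fun k hk => ?_
    have hk' : k ≤ n := Nat.lt_succ_iff.mp (Finset.mem_range.mp hk)
    rw [hw (n + 1) k, hw n k]
    have h1 : n + 1 - k = (n - k) + 1 := by omega
    have h2 : ((n:ℝ) + 1) - k = ((n - k : ℕ) : ℝ) + 1 := by
      push_cast [Nat.cast_sub hk']; ring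
    rw [h1, h2, Nat.factorial_succ]
    set j := n - k with hj
    have hjf : ((j.factorial : ℝ)) ≠ 0 := by positivity
    have hj1 : ((j : ℝ) + 1) ≠ 0 := by positivity
    push_cast
    field_simp
    ring
  -- second falling moment
  have hC : ∀ n : ℕ, (∑ k ∈ Finset.range (n + 2 + 1),
        (((n:ℝ) + 2) - k) * (((n:ℝ) + 2) - 1 - k) * w (n + 2) k)
      = γ ^ 2 * ∑ k ∈ Finset.range (n + 1), w n k := by
    intro n
    rw [Finset.sum_range_succ, Finset.sum_range_succ]
    have hz1 : (((n:ℝ) + 2) - ((n + 2 : ℕ) : ℝ)) = 0 := by push_cast; ring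
    have hz2 : (((n:ℝ) + 2) - 1 - ((n + 1 : ℕ) : ℝ)) = 0 := by push_cast; ring
    simp only [hz1, hz2, zero_mul, mul_zero, add_zero]
    rw [Finset.mul_sum]
    refine Finset.sum_congr rfl fun k hk => ?_
    have hk' : k ≤ n := Nat.lt_succ_iff.mp (Finset.mem_range.mp hk)
    rw [hw (n + 2) k, hw n k]
    have h1 : n + 2 - k = (n - k) + 1 + 1 := by omega
    have h2 : ((n:ℝ) + 2) - k = ((n - k : ℕ) : ℝ) + 2 := by
      push_cast [Nat.cast_sub hk']; ring
    have h3 : ((n:ℝ) + 2) - 1 - k = ((n - k : ℕ) : ℝ) + 1 := by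
      push_cast [Nat.cast_sub hk']; ring
    rw [h1, h2, h3, Nat.factorial_succ, Nat.factorial_succ]
    set j := n - k with hj
    have hjf : ((j.factorial : ℝ)) ≠ 0 := by positivity
    have hj1 : ((j : ℝ) + 1) ≠ 0 := by positivity
    have hj2 : ((j : ℝ) + 1 + 1) ≠ 0 := by positivity
    push_cast
    field_simp
    ring
  intro n hn
  obtain ⟨m, rfl⟩ : ∃ m, n = m + 2 := ⟨n - 2, by omega⟩
  have e2 : m + 2 - 2 = m := by omega
  have e1 : m + 2 - 1 = m + 1 := by omega
  rw [e1, e2]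
  have hc2 : ((m + 2 : ℕ) : ℝ) = (m : ℝ) + 2 := by push_cast; ring
  have key0 : (∑ k ∈ Finset.range (m + 2 + 1), w (m + 2) k)
      = (β' + γ) ^ (m + 2) / Real.Gamma (1 + γ' / β') * S (m + 2) := hA (m + 2)
  have key1 : (∑ k ∈ Finset.range (m + 2 + 1), (((m + 2 : ℕ) : ℝ) - k) * w (m + 2) k)
      = γ * ((β' + γ) ^ (m + 1) / Real.Gamma (1 + γ' / β') * S (m + 1)) := by
    have := hB (m + 1)
    rw [hA (m + 1)] at this
    rw [hc2]
    convert this using 2 <;> push_cast <;> ring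
  have key2 : (∑ k ∈ Finset.range (m + 2 + 1),
        (((m + 2 : ℕ) : ℝ) - k) * (((m + 2 : ℕ) : ℝ) - 1 - k) * w (m + 2) k)
      = γ ^ 2 * ((β' + γ) ^ m / Real.Gamma (1 + γ' / β') * S m) := by
    have := hC m
    rw [hA m] at this
    rw [hc2]
    exact this
  rw [key0, key1, key2]
  have hS0 := hSpos (m + 2)
  have hS1 := hSpos (m + 1)
  have hS2 := hSpos m
  have hΓ0' : Real.Gamma (1 + γ' / β') ≠ 0 := ne_of_gt hΓ0
  have hb : (β' + γ) ≠ 0 := ne_of_gt hβγ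
  constructor
  · field_simp
    ring
  · field_simp
    ring
end

section
/- Let β' > 0, γ > 0, γ' ≥ 0, set p = γ/(β'+γ) and r = 1 + γ'/β'. For k ≥ 0 define q_k = (1−p)^k · p^r · Γ(k+r)/(k!·Γ(r)) (the NegativeBinomial(r,p) mass function) and for m ≥ 0 define s_m = e^{−p}·p^m/m! (the Poisson(p) mass function). Then for each n and 0 ≤ k ≤ n, the ratio p_{n,k} = (β')^k·C(k+γ'/β',k)·γ^{n-k}/(n-k)! divided by Σ_{j=0}^{n} (β')^j·C(j+γ'/β',j)·γ^{n-j}/(n-j)! equals q_k·s_{n-k} / Σ_{j=0}^{n} q_j·s_{n-j}. -/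
theorem stmt_18 (β' γ γ' : ℝ) (hβ' : 0 < β') (hγ : 0 < γ) (hγ' : 0 ≤ γ')
    (p r : ℝ) (hp : p = γ / (β' + γ)) (hr : r = 1 + γ' / β')
    (q : ℕ → ℝ)
    (hq : ∀ k : ℕ, q k = (1 - p) ^ k * p ^ r * Real.Gamma (k + r)
      / (k.factorial * Real.Gamma r))
    (s : ℕ → ℝ)
    (hs : ∀ m : ℕ, s m = Real.exp (-p) * p ^ m / m.factorial)
    (w : ℕ → ℕ → ℝ)
    (hw : ∀ n k : ℕ, w n k = β' ^ k
      * (Real.Gamma (k + 1 + γ' / β') / (k.factorial * Real.Gamma (1 + γ' / β')))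
      * γ ^ (n - k) / (n - k).factorial) :
    ∀ n k : ℕ, k ≤ n →
      w n k / (∑ j ∈ Finset.range (n + 1), w n j)
        = q k * s (n - k) / (∑ j ∈ Finset.range (n + 1), q j * s (n - j)) := by
  intro n k hk
  have hA : (0:ℝ) < β' + γ := by linarith
  have hppos : 0 < p := by rw [hp]; positivity
  have h1p : 1 - p = β' / (β' + γ) := by
    rw [hp]; field_simp; ring
  set C : ℝ := p ^ r * Real.exp (-p) / (β' + γ) ^ n with hC
  have hCpos : 0 < C := by
    have := Real.rpow_pos_of_pos hppos r
    positivity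
  have key : ∀ j : ℕ, j ≤ n → q j * s (n - j) = C * w n j := by
    intro j hj
    have hG : Real.Gamma (↑j + 1 + γ' / β') = Real.Gamma (↑j + r) := by
      rw [hr]; ring_nf
    rw [hq, hs, hw, hG, ← hr, h1p, hC]
    have hpow : (β' + γ) ^ n = (β' + γ) ^ j * (β' + γ) ^ (n - j) := by
      rw [← pow_add, Nat.add_sub_cancel' hj]
    rw [hp, hpow, div_pow, div_pow]
    have hj' : ((j.factorial : ℝ)) ≠ 0 := by positivity
    have hnj' : (((n - j).factorial : ℝ)) ≠ 0 := by positivity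
    have hΓ : Real.Gamma r ≠ 0 := by
      have : 0 < r := by rw [hr]; positivity
      exact (Real.Gamma_pos_of_pos this).ne'
    field_simp
  have hsum : (∑ j ∈ Finset.range (n + 1), q j * s (n - j))
      = C * ∑ j ∈ Finset.range (n + 1), w n j := by
    rw [Finset.mul_sum]
    exact Finset.sum_congr rfl fun j hj => key j (Nat.lt_succ_iff.mp (Finset.mem_range.mp hj))
  rw [key k hk, hsum, mul_div_mul_left _ _ hCpos.ne']
end
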